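/- (Lemma A.2, minimax duality on the convex hull.) Let n be a natural number, let D̄ ⊆ ℝ^n be a nonempty convex compact set, let Θ be a nonempty finite type, let ω > 0, and let c : ℝ^n → Θ → ℝ be such that for each θ the map ρ ↦ c ρ θ is affine (hence continuous). Define L̄(ρ, Λ) = Σ_θ (c ρ θ) · (Λ θ) + (1/ω) · H(Λ) for ρ ∈ ℝ^n and probability vectors Λ on Θ. Then min_{ρ ∈ D̄} max_{Λ ∈ Δ(Θ)} L̄(ρ, Λ) = max_{Λ ∈ Δ(Θ)} min_{ρ ∈ D̄} L̄(ρ, Λ), where Δ(Θ) denotes the set of probability vectors on Θ, and both the outer minimum and the outer maximum are attained. -/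

import Mathlib

/-!
For fixed `ρ`, the Gibbs variational principle identifies the inner maximum: `L̄(ρ, ·)` is
maximised over the simplex by `softmax (ω • c ρ)`, with value `ω⁻¹ * logSumExp (ω • c ρ)`.
This value is continuous in `ρ`, so it has a minimiser `ρ₀` on the compact set `D̄`. As `c` is
affine and `D̄` convex, the first-order condition at `ρ₀` along segments in `D̄` (the derivative
of `logSumExp` being `softmax`) says that `ρ₀` minimises `L̄(·, Λ₀)` for
`Λ₀ = softmax (ω • c ρ₀)`. Hence `(ρ₀, Λ₀)` is a saddle point, and both sides equal `L̄(ρ₀, Λ₀)`.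
-/

open Real Finset Set

theorem HasDerivWithinAt.nonneg_of_isMinOn_Icc {g : ℝ → ℝ} {g' a b : ℝ} (hab : a < b)
    (hg : HasDerivWithinAt g g' (Icc a b) a) (hmin : IsMinOn g (Icc a b) a) : 0 ≤ g' := by
  have hseg : segment ℝ a (a + (b - a)) ⊆ Icc a b := by
    rw [add_sub_cancel, segment_eq_Icc hab.le]
  have := hmin.localize.hasFDerivWithinAt_nonneg hg.hasFDerivWithinAt
    (mem_posTangentConeAt_of_segment_subset hseg)
  simp only [ContinuousLinearMap.toSpanSingleton_apply, smul_eq_mul] at this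
  exact nonneg_of_mul_nonneg_right this (sub_pos.2 hab)

theorem continuous_of_affine_combination {E : Type*} [NormedAddCommGroup E] [NormedSpace ℝ E]
    [FiniteDimensional ℝ E] {g : E → ℝ}
    (hg : ∀ x y (t : ℝ), g (t • x + (1 - t) • y) = t * g x + (1 - t) * g y) : Continuous g := by
  have hconvex : ConvexOn ℝ univ g := ⟨convex_univ, fun x _ y _ s t _ _ hst => by
    obtain rfl : t = 1 - s := by linarith
    simp only [hg, smul_eq_mul, le_refl]⟩
  exact hconvex.locallyLipschitz.continuous

theorem isLeast_isGreatest_of_isSaddlePoint {α β : Type*} {A : Set α} {B : Set β}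
    (L : α → β → ℝ) {a₀ : α} {b₀ : β} (ha₀ : a₀ ∈ A) (hb₀ : b₀ ∈ B)
    (hmax : ∀ b ∈ B, L a₀ b ≤ L a₀ b₀) (hmin : ∀ a ∈ A, L a₀ b₀ ≤ L a b₀)
    (hbddAbove : ∀ a ∈ A, BddAbove {u | ∃ b ∈ B, u = L a b})
    (hbddBelow : ∀ b ∈ B, BddBelow {u | ∃ a ∈ A, u = L a b}) :
    IsLeast {w | ∃ a ∈ A, w = sSup {u | ∃ b ∈ B, u = L a b}} (L a₀ b₀) ∧
      IsGreatest {w | ∃ b ∈ B, w = sInf {u | ∃ a ∈ A, u = L a b}} (L a₀ b₀) := by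
  have hsup : sSup {u | ∃ b ∈ B, u = L a₀ b} = L a₀ b₀ :=
    IsGreatest.csSup_eq ⟨⟨b₀, hb₀, rfl⟩, by rintro _ ⟨b, hb, rfl⟩; exact hmax b hb⟩
  have hinf : sInf {u | ∃ a ∈ A, u = L a b₀} = L a₀ b₀ :=
    IsLeast.csInf_eq ⟨⟨a₀, ha₀, rfl⟩, by rintro _ ⟨a, ha, rfl⟩; exact hmin a ha⟩
  refine ⟨⟨⟨a₀, ha₀, hsup.symm⟩, ?_⟩, ⟨b₀, hb₀, hinf.symm⟩, ?_⟩
  · rintro _ ⟨a, ha, rfl⟩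
    exact (hmin a ha).trans (le_csSup (hbddAbove a ha) ⟨b₀, hb₀, rfl⟩)
  · rintro _ ⟨b, hb, rfl⟩
    exact (csInf_le (hbddBelow b hb) ⟨a₀, ha₀, rfl⟩).trans (hmax b hb)

theorem mul_log_sub_log_le_sub {p q : ℝ} (hp : 0 ≤ p) (hq : 0 < q) :
    p * (log q - log p) ≤ q - p := by
  rcases hp.eq_or_lt with rfl | hp
  · simpa using hq.le
  calc p * (log q - log p) = p * log (q / p) := by rw [log_div hq.ne' hp.ne']
    _ ≤ p * (q / p - 1) := mul_le_mul_of_nonneg_left (log_le_sub_one_of_pos (by positivity)) hp.le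
    _ = q - p := by field_simp

noncomputable section

variable {Θ : Type*} [Fintype Θ]

def logSumExp (x : Θ → ℝ) : ℝ := log (∑ θ, exp (x θ))

def softmax (x : Θ → ℝ) (θ : Θ) : ℝ := exp (x θ) / ∑ θ', exp (x θ')

def entropyLagrangian (ω : ℝ) (x Λ : Θ → ℝ) : ℝ :=
  ∑ θ, x θ * Λ θ + (1 / ω) * (-∑ θ, Λ θ * log (Λ θ))

theorem continuous_entropyLagrangian (ω : ℝ) (Λ : Θ → ℝ) :
    Continuous fun x => entropyLagrangian ω x Λ := by
  unfold entropyLagrangian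
  fun_prop

theorem entropyLagrangian_eq {ω : ℝ} (hω : ω ≠ 0) (x Λ : Θ → ℝ) :
    entropyLagrangian ω x Λ = ω⁻¹ * (∑ θ, Λ θ * (ω • x) θ - ∑ θ, Λ θ * log (Λ θ)) := by
  have hsum : ∑ θ, Λ θ * (ω • x) θ = ω * ∑ θ, x θ * Λ θ := by
    simp only [Pi.smul_apply, smul_eq_mul, mul_sum]
    exact sum_congr rfl fun θ _ => by ring
  rw [entropyLagrangian, hsum]
  field_simp
  ring

variable [Nonempty Θ]

theorem sum_exp_pos (x : Θ → ℝ) : 0 < ∑ θ, exp (x θ) :=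
  sum_pos (fun _ _ => exp_pos _) univ_nonempty

theorem continuous_logSumExp : Continuous (logSumExp : (Θ → ℝ) → ℝ) :=
  (continuous_finsetSum _ fun θ _ => (continuous_apply θ).rexp).log fun x => (sum_exp_pos x).ne'

theorem softmax_pos (x : Θ → ℝ) (θ : Θ) : 0 < softmax x θ :=
  div_pos (exp_pos _) (sum_exp_pos x)

theorem softmax_mem_stdSimplex (x : Θ → ℝ) : softmax x ∈ stdSimplex ℝ Θ :=
  ⟨fun θ => (softmax_pos x θ).le, by
    simp only [softmax, ← sum_div, div_self (sum_exp_pos x).ne']⟩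

theorem log_softmax (x : Θ → ℝ) (θ : Θ) : log (softmax x θ) = x θ - logSumExp x := by
  rw [softmax, log_div (exp_pos _).ne' (sum_exp_pos x).ne', log_exp, logSumExp]

theorem sum_mul_sub_sum_mul_log_le_logSumExp {x Λ : Θ → ℝ} (hΛ : Λ ∈ stdSimplex ℝ Θ) :
    ∑ θ, Λ θ * x θ - ∑ θ, Λ θ * log (Λ θ) ≤ logSumExp x := by
  have hgap : ∑ θ, Λ θ * (log (softmax x θ) - log (Λ θ)) ≤ ∑ θ, (softmax x θ - Λ θ) :=
    sum_le_sum fun θ _ => mul_log_sub_log_le_sub (hΛ.1 θ) (softmax_pos x θ)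
  simp only [log_softmax, mul_sub, sum_sub_distrib, ← sum_mul, hΛ.2,
    (softmax_mem_stdSimplex x).2] at hgap
  linarith

theorem sum_softmax_mul_sub_sum_mul_log_eq_logSumExp (x : Θ → ℝ) :
    ∑ θ, softmax x θ * x θ - ∑ θ, softmax x θ * log (softmax x θ) = logSumExp x := by
  simp only [log_softmax, mul_sub, sum_sub_distrib, ← sum_mul, (softmax_mem_stdSimplex x).2]
  ring

theorem hasDerivAt_logSumExp_add_smul (a d : Θ → ℝ) (t : ℝ) :
    HasDerivAt (fun s : ℝ => logSumExp (a + s • d)) (∑ θ, softmax (a + t • d) θ * d θ) t := by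
  have hsum : HasDerivAt (fun s : ℝ => ∑ θ, exp (a θ + s * d θ))
      (∑ θ, exp (a θ + t * d θ) * d θ) t :=
    HasDerivAt.fun_sum fun θ _ => by
      simpa using (((hasDerivAt_id t).mul_const (d θ)).const_add (a θ)).exp
  convert hsum.log (sum_exp_pos _).ne' using 1
  · rfl
  · simp only [softmax, Pi.add_apply, Pi.smul_apply, smul_eq_mul, div_mul_eq_mul_div, sum_div]

theorem sum_softmax_mul_le_of_forall_logSumExp_le {a b : Θ → ℝ}
    (h : ∀ t ∈ Icc (0 : ℝ) 1, logSumExp a ≤ logSumExp (a + t • (b - a))) :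
    ∑ θ, softmax a θ * a θ ≤ ∑ θ, softmax a θ * b θ := by
  have hderiv := (hasDerivAt_logSumExp_add_smul a (b - a) 0).hasDerivWithinAt (s := Icc 0 1)
  have hnonneg := hderiv.nonneg_of_isMinOn_Icc zero_lt_one fun t ht => by simpa using h t ht
  simp only [zero_smul, add_zero, Pi.sub_apply, mul_sub, sum_sub_distrib] at hnonneg
  linarith

theorem sum_softmax_mul_le_of_isMinOn {E : Type*} [AddCommGroup E] [Module ℝ E] {S : Set E}
    (hS : Convex ℝ S) {c : E → Θ → ℝ}
    (hc : ∀ θ x y (t : ℝ), c (t • x + (1 - t) • y) θ = t * c x θ + (1 - t) * c y θ)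
    {ρ₀ ρ : E} (hρ₀ : ρ₀ ∈ S) (hρ : ρ ∈ S) (hmin : IsMinOn (fun ρ => logSumExp (c ρ)) S ρ₀) :
    ∑ θ, softmax (c ρ₀) θ * c ρ₀ θ ≤ ∑ θ, softmax (c ρ₀) θ * c ρ θ := by
  refine sum_softmax_mul_le_of_forall_logSumExp_le fun t ht => ?_
  have hseg : c (t • ρ + (1 - t) • ρ₀) = c ρ₀ + t • (c ρ - c ρ₀) := by
    ext θ
    simp only [hc, Pi.add_apply, Pi.smul_apply, Pi.sub_apply, smul_eq_mul]
    ring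
  rw [← hseg]
  exact hmin (hS hρ hρ₀ ht.1 (sub_nonneg.2 ht.2) (add_sub_cancel t 1))

variable {ω : ℝ}

theorem entropyLagrangian_le (hω : 0 < ω) (x : Θ → ℝ) {Λ : Θ → ℝ} (hΛ : Λ ∈ stdSimplex ℝ Θ) :
    entropyLagrangian ω x Λ ≤ ω⁻¹ * logSumExp (ω • x) := by
  rw [entropyLagrangian_eq hω.ne']
  gcongr
  exact sum_mul_sub_sum_mul_log_le_logSumExp hΛ

theorem entropyLagrangian_softmax (hω : ω ≠ 0) (x : Θ → ℝ) :
    entropyLagrangian ω x (softmax (ω • x)) = ω⁻¹ * logSumExp (ω • x) := by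
  rw [entropyLagrangian_eq hω, sum_softmax_mul_sub_sum_mul_log_eq_logSumExp]

end

/-- Lemma A.2 (minimax duality on the convex hull): for a nonempty convex compact
set `D̄ ⊆ ℝ^n`, a nonempty finite type `Θ`, `ω > 0`, and `c` affine in `ρ`,
`min_{ρ ∈ D̄} max_{Λ ∈ Δ(Θ)} L̄(ρ,Λ) = max_{Λ ∈ Δ(Θ)} min_{ρ ∈ D̄} L̄(ρ,Λ)`,
with both the outer minimum and outer maximum attained, where
`L̄(ρ,Λ) = Σ_θ c ρ θ * Λ θ + (1/ω) * H(Λ)`. -/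
theorem minimax_duality_convex_hull
    {n : ℕ} (Dbar : Set (Fin n → ℝ)) (hne : Dbar.Nonempty)
    (hconv : Convex ℝ Dbar) (hcomp : IsCompact Dbar)
    {Θ : Type*} [Fintype Θ] [Nonempty Θ] (ω : ℝ) (hω : 0 < ω)
    (c : (Fin n → ℝ) → Θ → ℝ)
    (haff : ∀ (θ : Θ) (x y : Fin n → ℝ) (t : ℝ),
      c (t • x + (1 - t) • y) θ = t * c x θ + (1 - t) * c y θ) :
    ∃ v : ℝ,
      IsLeast { w : ℝ | ∃ ρ ∈ Dbar,
        w = sSup { u : ℝ | ∃ Λ : Θ → ℝ, (∀ θ, 0 ≤ Λ θ) ∧ (∑ θ, Λ θ) = 1 ∧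
          u = (∑ θ, c ρ θ * Λ θ) + (1 / ω) * (-∑ θ, Λ θ * Real.log (Λ θ)) } } v ∧
      IsGreatest { w : ℝ | ∃ Λ : Θ → ℝ, (∀ θ, 0 ≤ Λ θ) ∧ (∑ θ, Λ θ) = 1 ∧
        w = sInf { u : ℝ | ∃ ρ ∈ Dbar,
          u = (∑ θ, c ρ θ * Λ θ) + (1 / ω) * (-∑ θ, Λ θ * Real.log (Λ θ)) } } v := by
  have hc : Continuous c := continuous_pi fun θ => continuous_of_affine_combination (haff θ)
  have haffω : ∀ θ x y (t : ℝ),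
      (ω • c (t • x + (1 - t) • y)) θ = t * (ω • c x) θ + (1 - t) * (ω • c y) θ := by
    intro θ x y t
    simp only [Pi.smul_apply, smul_eq_mul, haff]
    ring
  obtain ⟨ρ₀, hρ₀, hmin⟩ := hcomp.exists_isMinOn hne
    (continuous_logSumExp.comp (hc.const_smul ω)).continuousOn
  set Λ₀ := softmax (ω • c ρ₀)
  have hmaxΛ : ∀ Λ ∈ stdSimplex ℝ Θ, entropyLagrangian ω (c ρ₀) Λ ≤ entropyLagrangian ω (c ρ₀) Λ₀ :=
    fun Λ hΛ => (entropyLagrangian_le hω _ hΛ).trans_eq (entropyLagrangian_softmax hω.ne' _).symm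
  have hminρ : ∀ ρ ∈ Dbar, entropyLagrangian ω (c ρ₀) Λ₀ ≤ entropyLagrangian ω (c ρ) Λ₀ := by
    intro ρ hρ
    simp only [entropyLagrangian_eq hω.ne']
    exact mul_le_mul_of_nonneg_left (sub_le_sub_right
      (sum_softmax_mul_le_of_isMinOn hconv haffω hρ₀ hρ hmin) _) (by positivity)
  obtain ⟨hleast, hgreatest⟩ := isLeast_isGreatest_of_isSaddlePoint
    (fun ρ Λ => entropyLagrangian ω (c ρ) Λ) hρ₀ (softmax_mem_stdSimplex _) hmaxΛ hminρ
    (fun ρ _ => ⟨_, by rintro _ ⟨Λ, hΛ, rfl⟩; exact entropyLagrangian_le hω _ hΛ⟩)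
    (fun Λ _ => (hcomp.image ((continuous_entropyLagrangian ω Λ).comp hc)).bddBelow.mono
      (by rintro _ ⟨ρ, hρ, rfl⟩; exact ⟨ρ, hρ, rfl⟩))
  exact ⟨entropyLagrangian ω (c ρ₀) Λ₀,
    by simpa only [stdSimplex, mem_ofPred_eq, and_assoc, entropyLagrangian] using hleast,
    by simpa only [stdSimplex, mem_ofPred_eq, and_assoc, entropyLagrangian] using hgreatest⟩
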